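/- Preservation of precision for reachable configurations: if (r̂, σ̂) is a fixed point of ⤳̂Ξ, wf(ξ̃, (r̃, σ̃, σ̃κ)), (r̃, σ̃, σ̃κ) ⤳̃Ξ (r̃', σ̃', σ̃′κ), and (r̂, σ̂) ⊒Ξ (r̃, σ̃, σ̃κ), then r̂ ⊒R r̃' (via σ̃′κ): for every configuration (e, ρ̃, ãκ) ∈ r̃' and every implied stack ψ̃ ∈ψ ãκ (via σ̃′κ), the converted configuration (e, H_Env(ρ̃), H_Kont(ψ̃)) is in r̂, under Assumptions 1–3. (Lemma: Preservation of precision for reachable configurations.) -/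
import Mathlib


/-!
Formalization of the P4F ("Pushdown Control-Flow Analysis for Free") framework:
ANF λ-calculus syntax, the finite-state abstract machine with store-allocated
continuations (P4F continuation allocator), the store-widened analysis, the
unbounded-stack abstract machine and its widened analysis, implied stacks,
sub-step relations, finite-state and unbounded-stack paths, well-formedness,
conversion functions induced by an address bijection, and the precision
relations.
-/

namespace P4F

/-! ANF syntax: expressions, atomic expressions, lambdas. -/
mutual
inductive Exp (Var : Type) : Type where
  | letCall (y : Var) (f : AExp Var) (ae : AExp Var) (body : Exp Var)
  | ret (ae : AExp Var)
inductive AExp (Var : Type) : Type where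
  | var (x : Var)
  | lam (l : Lam Var)
inductive Lam (Var : Type) : Type where
  | mk (x : Var) (body : Exp Var)
end

variable {Var Addr HAddr : Type}

/-- Pointwise containment of set-valued stores. -/
def SubStore {A B : Type} (σ σ' : A → Set B) : Prop := ∀ a, σ a ⊆ σ' a

open Classical in
/-- Join a set-valued store with a single-point store: `σ ⊔ [a ↦ d]`. -/
noncomputable def joinOne {A B : Type} (σ : A → Set B) (a : A) (d : Set B) : A → Set B :=
  fun a' => if a' = a then σ a' ∪ d else σ a'

/-- Binding environments: partial maps from variables to addresses. -/
abbrev EnvF (Var Addr : Type) : Type := Var → Option Addr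
/-- Abstract closures. -/
abbrev CloF (Var Addr : Type) : Type := Lam Var × EnvF Var Addr
/-- Value stores. -/
abbrev StoreF (Var Addr : Type) : Type := Addr → Set (CloF Var Addr)
/-- Stack frames. -/
abbrev FrameF (Var Addr : Type) : Type := Var × Exp Var × EnvF Var Addr
/-- Continuation addresses for the P4F allocator: either the halt address
    (`none`) or a pair of a target expression and environment. -/
abbrev KAddrF (Var Addr : Type) : Type := Option (Exp Var × EnvF Var Addr)
/-- Continuations: a topmost frame paired with the address of the rest of the stack. -/
abbrev KontF (Var Addr : Type) : Type := FrameF Var Addr × KAddrF Var Addr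
/-- Continuation stores. -/
abbrev KStoreF (Var Addr : Type) : Type := KAddrF Var Addr → Set (KontF Var Addr)

def emptyEnv : EnvF Var Addr := fun _ => none
def botStore : StoreF Var Addr := fun _ => ∅
def botKStore : KStoreF Var Addr := fun _ => ∅
/-- The distinguished halt continuation address. -/
def ahalt : KAddrF Var Addr := none

open Classical in
/-- Environment extension `ρ[x ↦ a]`. -/
noncomputable def upd (ρ : EnvF Var Addr) (x : Var) (a : Addr) : EnvF Var Addr :=
  fun y => if y = x then some a else ρ y

/-- Abstract atomic-expression evaluation. -/
def aeval : AExp Var → EnvF Var Addr → StoreF Var Addr → Set (CloF Var Addr)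
  | AExp.var x, ρ, σ =>
    match ρ x with
    | some a => σ a
    | none => ∅
  | AExp.lam l, ρ, _ => {(l, ρ)}

/-- Finite-state machine states `ς̃ = (e, ρ̃, σ̃, σ̃κ, ãκ)`. -/
structure StateF (Var Addr : Type) : Type where
  e : Exp Var
  ρ : EnvF Var Addr
  σ : StoreF Var Addr
  σκ : KStoreF Var Addr
  aκ : KAddrF Var Addr

/-- The finite-state transition relation `⤳̃Σ`, parametrized by the value
    allocator; the continuation allocator is the P4F allocator
    `alloc̃κ(ς̃, e', ρ̃', σ̃') = (e', ρ̃')`. -/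
inductive StepF (alloc : Var → StateF Var Addr → Addr) :
    StateF Var Addr → StateF Var Addr → Prop where
  | call {y x : Var} {f ae : AExp Var} {e e' : Exp Var} {ρ ρlam : EnvF Var Addr}
      {σ : StoreF Var Addr} {σκ : KStoreF Var Addr} {aκ : KAddrF Var Addr} :
      (Lam.mk x e', ρlam) ∈ aeval f ρ σ →
      StepF alloc ⟨Exp.letCall y f ae e, ρ, σ, σκ, aκ⟩
        ⟨e',
         upd ρlam x (alloc x ⟨Exp.letCall y f ae e, ρ, σ, σκ, aκ⟩),
         joinOne σ (alloc x ⟨Exp.letCall y f ae e, ρ, σ, σκ, aκ⟩) (aeval ae ρ σ),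
         joinOne σκ (some (e', upd ρlam x (alloc x ⟨Exp.letCall y f ae e, ρ, σ, σκ, aκ⟩)))
           {((y, e, ρ), aκ)},
         some (e', upd ρlam x (alloc x ⟨Exp.letCall y f ae e, ρ, σ, σκ, aκ⟩))⟩
  | ret {x : Var} {ae : AExp Var} {e : Exp Var} {ρ ρκ : EnvF Var Addr}
      {σ : StoreF Var Addr} {σκ : KStoreF Var Addr} {aκ aκ' : KAddrF Var Addr} :
      ((x, e, ρκ), aκ') ∈ σκ aκ →
      StepF alloc ⟨Exp.ret ae, ρ, σ, σκ, aκ⟩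
        ⟨e, upd ρκ x (alloc x ⟨Exp.ret ae, ρ, σ, σκ, aκ⟩),
         joinOne σ (alloc x ⟨Exp.ret ae, ρ, σ, σκ, aκ⟩) (aeval ae ρ σ),
         σκ, aκ'⟩

/-- Finite-state configurations `c̃ = (e, ρ̃, ãκ)`. -/
abbrev ConfF (Var Addr : Type) : Type := Exp Var × EnvF Var Addr × KAddrF Var Addr

/-- Widened state spaces `ξ̃ = (r̃, σ̃, σ̃κ)`. -/
structure XiF (Var Addr : Type) : Type where
  r : Set (ConfF Var Addr)
  σ : StoreF Var Addr
  σκ : KStoreF Var Addr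

def initConfF (e0 : Exp Var) : ConfF Var Addr := (e0, emptyEnv, ahalt)
def initStateF (e0 : Exp Var) : StateF Var Addr := ⟨e0, emptyEnv, botStore, botKStore, ahalt⟩
/-- The initial widened result `({(e₀, ∅, ã_halt)}, ⊥, ⊥)`. -/
def initXiF (e0 : Exp Var) : XiF Var Addr := ⟨{initConfF e0}, botStore, botKStore⟩

/-- The state obtained by pairing a configuration with the global stores. -/
def stateOfF (ξ : XiF Var Addr) (c : ConfF Var Addr) : StateF Var Addr :=
  ⟨c.1, c.2.1, ξ.σ, ξ.σκ, c.2.2⟩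

/-- The set `s̃` of all successors of the reachable configurations under the
    global stores, together with the injected initial state. -/
def succSetF (alloc : Var → StateF Var Addr → Addr) (e0 : Exp Var)
    (ξ : XiF Var Addr) : Set (StateF Var Addr) :=
  insert (initStateF e0) {ς' | ∃ c ∈ ξ.r, StepF alloc (stateOfF ξ c) ς'}

/-- The widened transfer relation `⤳̃Ξ`. -/
def XiStepF (alloc : Var → StateF Var Addr → Addr) (e0 : Exp Var)
    (ξ ξ' : XiF Var Addr) : Prop :=
  ξ'.r = {c | ∃ ς ∈ succSetF alloc e0 ξ, c = (ς.e, ς.ρ, ς.aκ)} ∧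
  ξ'.σ = (fun a => ⋃ ς ∈ succSetF alloc e0 ξ, ς.σ a) ∧
  ξ'.σκ = (fun aκ => ⋃ ς ∈ succSetF alloc e0 ξ, ς.σκ aκ)

/-- Implied stacks: `ψ̃ ∈ψ ãκ (via σ̃κ)`. -/
inductive Implied (σκ : KStoreF Var Addr) : KAddrF Var Addr → List (KontF Var Addr) → Prop where
  | halt : Implied σκ ahalt []
  | cons {φ : FrameF Var Addr} {aκ' aκ : KAddrF Var Addr} {ψ : List (KontF Var Addr)} :
      (φ, aκ') ∈ σκ aκ → Implied σκ aκ' ψ → aκ ≠ ahalt →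
      Implied σκ aκ ((φ, aκ') :: ψ)

/-- The finite-state sub-step relation `⤳⊑̃`. -/
def SubStepF (alloc : Var → StateF Var Addr → Addr) (ς ς' : StateF Var Addr) : Prop :=
  ∃ σ₁ σκ₁ σ₂ σκ₂,
    StepF alloc ⟨ς.e, ς.ρ, σ₁, σκ₁, ς.aκ⟩ ⟨ς'.e, ς'.ρ, σ₂, σκ₂, ς'.aκ⟩ ∧
    SubStore σ₁ ς.σ ∧ SubStore σκ₁ ς.σκ ∧ SubStore σ₂ ς'.σ ∧ SubStore σκ₂ ς'.σκ

/-- The finite-state sub-step relation `⤳⊑̃ (with ã, clo)`. -/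
def SubStepFWithClo (alloc : Var → StateF Var Addr → Addr) (ς ς' : StateF Var Addr)
    (a : Addr) (clo : CloF Var Addr) : Prop :=
  ∃ σ₁ σκ₁ σ₂ σκ₂,
    StepF alloc ⟨ς.e, ς.ρ, σ₁, σκ₁, ς.aκ⟩ ⟨ς'.e, ς'.ρ, σ₂, σκ₂, ς'.aκ⟩ ∧
    SubStore σ₁ ς.σ ∧ SubStore σκ₁ ς.σκ ∧ SubStore σ₂ ς'.σ ∧ SubStore σκ₂ ς'.σκ ∧
    clo ∈ σ₂ a

/-- The finite-state sub-step relation `⤳⊑̃ (with κ̃, ã''κ)`. -/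
def SubStepFWithKont (alloc : Var → StateF Var Addr → Addr) (ς ς' : StateF Var Addr)
    (aκ'' : KAddrF Var Addr) (κ : KontF Var Addr) : Prop :=
  ∃ σ₁ σκ₁ σ₂ σκ₂,
    StepF alloc ⟨ς.e, ς.ρ, σ₁, σκ₁, ς.aκ⟩ ⟨ς'.e, ς'.ρ, σ₂, σκ₂, ς'.aκ⟩ ∧
    SubStore σ₁ ς.σ ∧ SubStore σκ₁ ς.σκ ∧ SubStore σ₂ ς'.σ ∧ SubStore σκ₂ ς'.σκ ∧
    κ ∈ σκ₂ aκ''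

/-- Finite-state paths `(c̃, ψ̃) ↪̃ (c̃', ψ̃') (via ξ̃, ξ̃')`. -/
inductive PathF (alloc : Var → StateF Var Addr → Addr) (ξ ξ' : XiF Var Addr) :
    ConfF Var Addr × List (KontF Var Addr) →
    ConfF Var Addr × List (KontF Var Addr) → Prop where
  | refl {e : Exp Var} {ρ : EnvF Var Addr} {aκ : KAddrF Var Addr}
      {ψ : List (KontF Var Addr)} :
      (e, ρ, aκ) ∈ ξ'.r → Implied ξ'.σκ aκ ψ →
      PathF alloc ξ ξ' ((e, ρ, aκ), ψ) ((e, ρ, aκ), ψ)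
  | ret {c : ConfF Var Addr} {ψ₀ : List (KontF Var Addr)} {ae : AExp Var}
      {ρ'' ρκ : EnvF Var Addr} {aκ'' aκ' : KAddrF Var Addr} {x : Var} {e' : Exp Var}
      {ψ' : List (KontF Var Addr)} :
      PathF alloc ξ ξ' (c, ψ₀) ((Exp.ret ae, ρ'', aκ''), ((x, e', ρκ), aκ') :: ψ') →
      (Exp.ret ae, ρ'', aκ'') ∈ ξ.r →
      ((x, e', ρκ), aκ') ∈ ξ.σκ aκ'' →
      (e', upd ρκ x (alloc x ⟨Exp.ret ae, ρ'', ξ.σ, ξ.σκ, aκ''⟩), aκ') ∈ ξ'.r →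
      SubStepF alloc ⟨Exp.ret ae, ρ'', ξ.σ, ξ.σκ, aκ''⟩
        ⟨e', upd ρκ x (alloc x ⟨Exp.ret ae, ρ'', ξ.σ, ξ.σκ, aκ''⟩), ξ'.σ, ξ'.σκ, aκ'⟩ →
      PathF alloc ξ ξ' (c, ψ₀)
        ((e', upd ρκ x (alloc x ⟨Exp.ret ae, ρ'', ξ.σ, ξ.σκ, aκ''⟩), aκ'), ψ')
  | call {c : ConfF Var Addr} {ψ₀ : List (KontF Var Addr)} {x : Var}
      {f ae : AExp Var} {e'' e' : Exp Var} {ρ'' ρ' : EnvF Var Addr}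
      {aκ'' aκ' : KAddrF Var Addr} {ψ' : List (KontF Var Addr)} :
      PathF alloc ξ ξ' (c, ψ₀) ((Exp.letCall x f ae e'', ρ'', aκ''), ψ') →
      ((x, e'', ρ''), aκ'') ∈ ξ'.σκ aκ' →
      SubStepF alloc ⟨Exp.letCall x f ae e'', ρ'', ξ.σ, ξ.σκ, aκ''⟩
        ⟨e', ρ', ξ'.σ, ξ'.σκ, aκ'⟩ →
      PathF alloc ξ ξ' (c, ψ₀) ((e', ρ', aκ'), ((x, e'', ρ''), aκ'') :: ψ')

/-- `Entry` maps a continuation address to the entry-point configuration of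
    the function invocation whose configurations use that address. -/
def Entry (e0 : Exp Var) : KAddrF Var Addr → ConfF Var Addr
  | none => (e0, emptyEnv, ahalt)
  | some (eκ, ρκ) => (eκ, ρκ, some (eκ, ρκ))

/-- The non-recursive well-formedness sub-properties
    `wf_⊑ ∧ wf_init ∧ wf_halt ∧ wf_r̃ ∧ wf_σ̃ ∧ wf_σ̃κ`. -/
def WFRest (alloc : Var → StateF Var Addr → Addr) (e0 : Exp Var)
    (ξ ξ' : XiF Var Addr) : Prop :=
  (ξ.r ⊆ ξ'.r ∧ SubStore ξ.σ ξ'.σ ∧ SubStore ξ.σκ ξ'.σκ) ∧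
  (initConfF e0 ∈ ξ'.r) ∧
  (∀ κ : KontF Var Addr, κ ∉ ξ'.σκ ahalt) ∧
  (∀ c ∈ ξ'.r, ∃ ψ, Implied ξ'.σκ c.2.2 ψ ∧
      PathF alloc ξ ξ' (initConfF e0, []) (c, ψ)) ∧
  (∀ (a : Addr) (clo : CloF Var Addr), clo ∈ ξ'.σ a →
      ∃ c ∈ ξ.r, ∃ c' ∈ ξ'.r,
        SubStepFWithClo alloc (stateOfF ξ c) (stateOfF ξ' c') a clo) ∧
  (∀ (aκ' : KAddrF Var Addr) (x : Var) (e : Exp Var) (ρκ : EnvF Var Addr)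
      (aκ : KAddrF Var Addr), ((x, e, ρκ), aκ) ∈ ξ'.σκ aκ' →
      ∃ (eκ' : Exp Var) (ρκ' : EnvF Var Addr), aκ' = some (eκ', ρκ') ∧
        Entry e0 aκ' ∈ ξ'.r ∧
        ∃ (f ae : AExp Var), (Exp.letCall x f ae e, ρκ, aκ) ∈ ξ.r ∧
          SubStepFWithKont alloc ⟨Exp.letCall x f ae e, ρκ, ξ.σ, ξ.σκ, aκ⟩
            ⟨eκ', ρκ', ξ'.σ, ξ'.σκ, aκ'⟩ aκ' ((x, e, ρκ), aκ))

/-- Well-formedness `wf(ξ̃, ξ̃')`. -/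
inductive WF (alloc : Var → StateF Var Addr → Addr) (e0 : Exp Var) :
    XiF Var Addr → XiF Var Addr → Prop where
  | init :
      WFRest alloc e0 (initXiF e0) (initXiF e0) →
      WF alloc e0 (initXiF e0) (initXiF e0)
  | step {ξ'' ξ ξ' : XiF Var Addr} :
      WF alloc e0 ξ'' ξ → XiStepF alloc e0 ξ ξ' → WFRest alloc e0 ξ ξ' →
      WF alloc e0 ξ ξ'

/-! ### The unbounded-stack machine -/

/-- Unbounded-stack machine states `ς̂ = (e, ρ̂, σ̂, κ̂)`. -/
structure StateH (Var HAddr : Type) : Type where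
  e : Exp Var
  ρ : EnvF Var HAddr
  σ : StoreF Var HAddr
  κ : List (FrameF Var HAddr)

/-- The unbounded-stack transition relation `⤳̂Σ`. -/
inductive StepH (halloc : Var → StateH Var HAddr → HAddr) :
    StateH Var HAddr → StateH Var HAddr → Prop where
  | call {y x : Var} {f ae : AExp Var} {e e' : Exp Var} {ρ ρlam : EnvF Var HAddr}
      {σ : StoreF Var HAddr} {κ : List (FrameF Var HAddr)} :
      (Lam.mk x e', ρlam) ∈ aeval f ρ σ →
      StepH halloc ⟨Exp.letCall y f ae e, ρ, σ, κ⟩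
        ⟨e', upd ρlam x (halloc x ⟨Exp.letCall y f ae e, ρ, σ, κ⟩),
         joinOne σ (halloc x ⟨Exp.letCall y f ae e, ρ, σ, κ⟩) (aeval ae ρ σ),
         (y, e, ρ) :: κ⟩
  | ret {x : Var} {ae : AExp Var} {e : Exp Var} {ρ ρκ : EnvF Var HAddr}
      {σ : StoreF Var HAddr} {κ : List (FrameF Var HAddr)} :
      StepH halloc ⟨Exp.ret ae, ρ, σ, (x, e, ρκ) :: κ⟩
        ⟨e, upd ρκ x (halloc x ⟨Exp.ret ae, ρ, σ, (x, e, ρκ) :: κ⟩),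
         joinOne σ (halloc x ⟨Exp.ret ae, ρ, σ, (x, e, ρκ) :: κ⟩) (aeval ae ρ σ),
         κ⟩

/-- Unbounded-stack configurations `ĉ = (e, ρ̂, κ̂)`. -/
abbrev ConfH (Var HAddr : Type) : Type := Exp Var × EnvF Var HAddr × List (FrameF Var HAddr)

/-- Unbounded-stack widened state spaces `ξ̂ = (r̂, σ̂)`. -/
structure XiH (Var HAddr : Type) : Type where
  r : Set (ConfH Var HAddr)
  σ : StoreF Var HAddr

def initConfH (e0 : Exp Var) : ConfH Var HAddr := (e0, emptyEnv, [])
def initStateH (e0 : Exp Var) : StateH Var HAddr := ⟨e0, emptyEnv, botStore, []⟩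

def succSetH (halloc : Var → StateH Var HAddr → HAddr) (e0 : Exp Var)
    (ξ : XiH Var HAddr) : Set (StateH Var HAddr) :=
  insert (initStateH e0) {ς' | ∃ c ∈ ξ.r, StepH halloc ⟨c.1, c.2.1, ξ.σ, c.2.2⟩ ς'}

/-- The unbounded-stack widened transfer relation `⤳̂Ξ`. -/
def XiStepH (halloc : Var → StateH Var HAddr → HAddr) (e0 : Exp Var)
    (ξ ξ' : XiH Var HAddr) : Prop :=
  ξ'.r = {c | ∃ ς ∈ succSetH halloc e0 ξ, c = (ς.e, ς.ρ, ς.κ)} ∧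
  ξ'.σ = (fun a => ⋃ ς ∈ succSetH halloc e0 ξ, ς.σ a)

/-- The unbounded-stack sub-step relation `⤳⊑̂`. -/
def SubStepH (halloc : Var → StateH Var HAddr → HAddr) (ς ς' : StateH Var HAddr) : Prop :=
  ∃ σ₂, StepH halloc ⟨ς.e, ς.ρ, ς.σ, ς.κ⟩ ⟨ς'.e, ς'.ρ, σ₂, ς'.κ⟩ ∧ SubStore σ₂ ς'.σ

/-- Unbounded-stack paths `ĉ ↪̂ ĉ' (via r̂, σ̂)`. -/
inductive PathH (halloc : Var → StateH Var HAddr → HAddr)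
    (rH : Set (ConfH Var HAddr)) (σH : StoreF Var HAddr) :
    ConfH Var HAddr → ConfH Var HAddr → Prop where
  | refl (c : ConfH Var HAddr) : PathH halloc rH σH c c
  | step {c c' : ConfH Var HAddr} {e' : Exp Var} {ρ' : EnvF Var HAddr}
      {κ' : List (FrameF Var HAddr)} :
      PathH halloc rH σH c c' →
      SubStepH halloc ⟨c'.1, c'.2.1, σH, c'.2.2⟩ ⟨e', ρ', σH, κ'⟩ →
      PathH halloc rH σH c (e', ρ', κ')

/-! ### Conversions and precision relations (Assumption 1) -/

/-- `H_Env` induced by the address bijection. -/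
def HEnv (HA : Addr ≃ HAddr) (ρ : EnvF Var Addr) : EnvF Var HAddr :=
  fun x => (ρ x).map HA

/-- `H_Clo`. -/
def HClo (HA : Addr ≃ HAddr) (clo : CloF Var Addr) : CloF Var HAddr :=
  (clo.1, HEnv HA clo.2)

/-- `H_Frame`. -/
def HFrame (HA : Addr ≃ HAddr) (φ : FrameF Var Addr) : FrameF Var HAddr :=
  (φ.1, φ.2.1, HEnv HA φ.2.2)

/-- `H_Kont`: componentwise conversion of an implied stack into an unbounded stack. -/
def HKont (HA : Addr ≃ HAddr) (ψ : List (KontF Var Addr)) : List (FrameF Var HAddr) :=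
  ψ.map fun k => HFrame HA k.1

/-- `H_C`: conversion of a finite-state configuration with an implied stack
    into an unbounded-stack configuration. -/
def HC (HA : Addr ≃ HAddr) (c : ConfF Var Addr) (ψ : List (KontF Var Addr)) :
    ConfH Var HAddr :=
  (c.1, HEnv HA c.2.1, HKont HA ψ)

/-- Store precision `σ̂ ⊒Store σ̃`. -/
def StorePrec (HA : Addr ≃ HAddr) (σH : StoreF Var HAddr) (σ : StoreF Var Addr) : Prop :=
  ∀ (a : Addr) (clo : CloF Var Addr), clo ∈ σ a → HClo HA clo ∈ σH (HA a)

/-- Reachable-configurations precision `r̂ ⊒R r̃ (via σ̃κ)`. -/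
def RPrec (HA : Addr ≃ HAddr) (rH : Set (ConfH Var HAddr))
    (r : Set (ConfF Var Addr)) (σκ : KStoreF Var Addr) : Prop :=
  ∀ (e : Exp Var) (ρ : EnvF Var Addr) (aκ : KAddrF Var Addr)
    (ψ : List (KontF Var Addr)),
    (e, ρ, aκ) ∈ r → Implied σκ aκ ψ → (e, HEnv HA ρ, HKont HA ψ) ∈ rH

/-- State-space precision `ξ̂ ⊒Ξ ξ̃`. -/
def XiPrec (HA : Addr ≃ HAddr) (ξH : XiH Var HAddr) (ξ : XiF Var Addr) : Prop :=
  RPrec HA ξH.r ξ.r ξ.σκ ∧ StorePrec HA ξH.σ ξ.σ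

/-- Assumption 2 (allocation equivalence). -/
def AllocEquiv (HA : Addr ≃ HAddr) (alloc : Var → StateF Var Addr → Addr)
    (halloc : Var → StateH Var HAddr → HAddr) : Prop :=
  ∀ (x : Var) (e : Exp Var) (ρ : EnvF Var Addr) (σ : StoreF Var Addr)
    (σκ : KStoreF Var Addr) (aκ : KAddrF Var Addr) (σH : StoreF Var HAddr)
    (ψ : List (KontF Var Addr)),
    StorePrec HA σH σ → Implied σκ aκ ψ →
    halloc x ⟨e, HEnv HA ρ, σH, HKont HA ψ⟩ = HA (alloc x ⟨e, ρ, σ, σκ, aκ⟩)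

/-- Assumption 3 (allocation consistency). -/
def AllocConsistent (alloc : Var → StateF Var Addr → Addr) (e0 : Exp Var) : Prop :=
  ∀ (ξp ξ ξ' : XiF Var Addr) (e e' : Exp Var) (ρ ρ' : EnvF Var Addr)
    (aκ aκ' : KAddrF Var Addr) (σ'' : StoreF Var Addr) (σκ'' : KStoreF Var Addr)
    (x : Var),
    WF alloc e0 ξp ξ →
    StepF alloc ⟨e, ρ, ξ.σ, ξ.σκ, aκ⟩
      ⟨e', upd ρ' x (alloc x ⟨e, ρ, ξ.σ, ξ.σκ, aκ⟩), σ'', σκ'', aκ'⟩ →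
    XiStepF alloc e0 ξ ξ' →
    alloc x ⟨e, ρ, ξ.σ, ξ.σκ, aκ⟩ = alloc x ⟨e, ρ, ξ'.σ, ξ'.σκ, aκ⟩

end P4F

namespace P4F

/-! ### Auxiliary development for the proof -/

section Aux

variable {Var Addr HAddr : Type}

/-- The widened transfer relation as a function. -/
def Fstep (alloc : Var → StateF Var Addr → Addr) (e0 : Exp Var) (ξ : XiF Var Addr) :
    XiF Var Addr :=
  ⟨{c | ∃ ς ∈ succSetF alloc e0 ξ, c = (ς.e, ς.ρ, ς.aκ)},
   fun a => ⋃ ς ∈ succSetF alloc e0 ξ, ς.σ a,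
   fun aκ => ⋃ ς ∈ succSetF alloc e0 ξ, ς.σκ aκ⟩

lemma xiStepF_eq_Fstep {alloc : Var → StateF Var Addr → Addr} {e0 : Exp Var}
    {ξ ξ' : XiF Var Addr} (h : XiStepF alloc e0 ξ ξ') : ξ' = Fstep alloc e0 ξ := by
  obtain ⟨r', σ', σκ'⟩ := ξ'
  obtain ⟨h1, h2, h3⟩ := h
  simp only [Fstep, XiF.mk.injEq]
  exact ⟨h1, h2, h3⟩

lemma xiStepF_Fstep (alloc : Var → StateF Var Addr → Addr) (e0 : Exp Var)
    (ξ : XiF Var Addr) : XiStepF alloc e0 ξ (Fstep alloc e0 ξ) :=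
  ⟨rfl, rfl, rfl⟩

/-- The chain of widened results. -/
def chainXi (alloc : Var → StateF Var Addr → Addr) (e0 : Exp Var) (m : ℕ) :
    XiF Var Addr :=
  (Fstep alloc e0)^[m] (initXiF e0)

lemma chainXi_zero (alloc : Var → StateF Var Addr → Addr) (e0 : Exp Var) :
    chainXi (Addr := Addr) alloc e0 0 = initXiF e0 := rfl

lemma chainXi_succ (alloc : Var → StateF Var Addr → Addr) (e0 : Exp Var) (m : ℕ) :
    chainXi alloc e0 (m + 1) = Fstep alloc e0 (chainXi alloc e0 m) :=
  Function.iterate_succ_apply' _ _ _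

lemma mem_succSetF {alloc : Var → StateF Var Addr → Addr} {e0 : Exp Var}
    {ξ : XiF Var Addr} {ς : StateF Var Addr} :
    ς ∈ succSetF alloc e0 ξ ↔
      ς = initStateF e0 ∨ ∃ c ∈ ξ.r, StepF alloc (stateOfF ξ c) ς := by
  simp [succSetF, Set.mem_insert_iff, Set.mem_setOf_eq]

lemma mem_Fstep_r {alloc : Var → StateF Var Addr → Addr} {e0 : Exp Var}
    {ξ : XiF Var Addr} {c : ConfF Var Addr} :
    c ∈ (Fstep alloc e0 ξ).r ↔
      c = initConfF e0 ∨
      ∃ c0 ∈ ξ.r, ∃ ς', StepF alloc (stateOfF ξ c0) ς' ∧ c = (ς'.e, ς'.ρ, ς'.aκ) := by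
  constructor
  · rintro ⟨ς, hς, rfl⟩
    rcases mem_succSetF.1 hς with rfl | ⟨c0, hc0, hst⟩
    · exact Or.inl rfl
    · exact Or.inr ⟨c0, hc0, ς, hst, rfl⟩
  · rintro (rfl | ⟨c0, hc0, ς', hst, rfl⟩)
    · exact ⟨initStateF e0, mem_succSetF.2 (Or.inl rfl), rfl⟩
    · exact ⟨ς', mem_succSetF.2 (Or.inr ⟨c0, hc0, hst⟩), rfl⟩

lemma mem_Fstep_σκ {alloc : Var → StateF Var Addr → Addr} {e0 : Exp Var}
    {ξ : XiF Var Addr} {aκ : KAddrF Var Addr} {κ : KontF Var Addr} :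
    κ ∈ (Fstep alloc e0 ξ).σκ aκ ↔
      ∃ c0 ∈ ξ.r, ∃ ς', StepF alloc (stateOfF ξ c0) ς' ∧ κ ∈ ς'.σκ aκ := by
  constructor
  · intro h
    rcases Set.mem_iUnion₂.1 h with ⟨ς, hς, hκ⟩
    rcases mem_succSetF.1 hς with rfl | ⟨c0, hc0, hst⟩
    · exact absurd hκ (by simp [initStateF, botKStore])
    · exact ⟨c0, hc0, ς, hst, hκ⟩
  · rintro ⟨c0, hc0, ς', hst, hκ⟩
    exact Set.mem_iUnion₂.2 ⟨ς', mem_succSetF.2 (Or.inr ⟨c0, hc0, hst⟩), hκ⟩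

lemma mem_Fstep_σ {alloc : Var → StateF Var Addr → Addr} {e0 : Exp Var}
    {ξ : XiF Var Addr} {a : Addr} {clo : CloF Var Addr} :
    clo ∈ (Fstep alloc e0 ξ).σ a ↔
      ∃ c0 ∈ ξ.r, ∃ ς', StepF alloc (stateOfF ξ c0) ς' ∧ clo ∈ ς'.σ a := by
  constructor
  · intro h
    rcases Set.mem_iUnion₂.1 h with ⟨ς, hς, hκ⟩
    rcases mem_succSetF.1 hς with rfl | ⟨c0, hc0, hst⟩
    · exact absurd hκ (by simp [initStateF, botStore])
    · exact ⟨c0, hc0, ς, hst, hκ⟩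
  · rintro ⟨c0, hc0, ς', hst, hκ⟩
    exact Set.mem_iUnion₂.2 ⟨ς', mem_succSetF.2 (Or.inr ⟨c0, hc0, hst⟩), hκ⟩

lemma aeval_mono {ae : AExp Var} {ρ : EnvF Var Addr} {σa σb : StoreF Var Addr}
    (h : SubStore σa σb) : aeval ae ρ σa ⊆ aeval ae ρ σb := by
  cases ae with
  | var x =>
    cases hx : ρ x with
    | none => intro z hz; simp [aeval, hx] at hz
    | some a => intro z hz; simp only [aeval, hx] at hz ⊢; exact h a hz
  | lam l => intro z hz; simpa [aeval] using hz

lemma Implied.mono {σκa σκb : KStoreF Var Addr} (h : SubStore σκa σκb) :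
    ∀ {aκ ψ}, Implied σκa aκ ψ → Implied σκb aκ ψ := by
  intro aκ ψ him
  induction him with
  | halt => exact .halt
  | cons hκ _ hne ih => exact .cons (h _ hκ) ih hne

lemma StorePrec.of_sub {HA : Addr ≃ HAddr} {σH : StoreF Var HAddr}
    {σa σb : StoreF Var Addr} (hsub : SubStore σa σb) (h : StorePrec HA σH σb) :
    StorePrec HA σH σa :=
  fun a clo hc => h a clo (hsub a hc)

lemma aeval_prec {HA : Addr ≃ HAddr} {σH : StoreF Var HAddr} {σ : StoreF Var Addr}
    (hsp : StorePrec HA σH σ) {ae : AExp Var} {ρ : EnvF Var Addr} {clo : CloF Var Addr}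
    (h : clo ∈ aeval ae ρ σ) : HClo HA clo ∈ aeval ae (HEnv HA ρ) σH := by
  cases ae with
  | var x =>
    cases hx : ρ x with
    | none => simp [aeval, hx] at h
    | some a =>
      have hx' : (HEnv HA ρ) x = some (HA a) := by simp [HEnv, hx]
      simp only [aeval, hx] at h
      simp only [aeval, hx']
      exact hsp a clo h
  | lam l =>
    simp only [aeval, Set.mem_singleton_iff] at h
    subst h
    simp [aeval, HClo]

lemma HEnv_upd (HA : Addr ≃ HAddr) (ρ : EnvF Var Addr) (x : Var) (a : Addr) :
    HEnv HA (upd ρ x a) = upd (HEnv HA ρ) x (HA a) := by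
  funext y
  simp only [HEnv, upd]
  split <;> simp

lemma HEnv_empty (HA : Addr ≃ HAddr) :
    HEnv HA (emptyEnv : EnvF Var Addr) = emptyEnv := rfl

lemma HKont_cons (HA : Addr ≃ HAddr) (κ : KontF Var Addr) (ψ : List (KontF Var Addr)) :
    HKont HA (κ :: ψ) = (κ.1.1, κ.1.2.1, HEnv HA κ.1.2.2) :: HKont HA ψ := rfl

lemma chain_extract {alloc : Var → StateF Var Addr → Addr} {e0 : Exp Var}
    {ξp ξc : XiF Var Addr} (h : WF alloc e0 ξp ξc) :
    ∃ n, ξc = chainXi alloc e0 n ∧ WF alloc e0 (initXiF e0) (initXiF e0) ∧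
      ∀ m, m < n → WF alloc e0 (chainXi alloc e0 m) (chainXi alloc e0 (m + 1)) := by
  induction h with
  | init hrest => exact ⟨0, rfl, .init hrest, by omega⟩
  | @step ξ'' ξ ξ' hwf hxi hrest ih =>
    obtain ⟨n, hn, h0, hall⟩ := ih
    have hξ' : ξ' = chainXi alloc e0 (n + 1) := by
      rw [chainXi_succ, ← hn]; exact xiStepF_eq_Fstep hxi
    refine ⟨n + 1, hξ', h0, ?_⟩
    intro m hm
    rcases Nat.lt_succ_iff_lt_or_eq.1 hm with h | rfl
    · exact hall m h
    · rw [← hn, ← hξ']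
      exact .step hwf hxi hrest

/-- Level-annotated implied stacks with weights. -/
inductive WImp (σκs : ℕ → KStoreF Var Addr) (B : ℕ) :
    KAddrF Var Addr → List (KontF Var Addr) → ℕ → Prop where
  | halt : WImp σκs B ahalt [] 0
  | cons {φ : FrameF Var Addr} {aκ' aκ : KAddrF Var Addr} {ψ : List (KontF Var Addr)}
      {w j : ℕ} :
      j ≤ B → (φ, aκ') ∈ σκs j aκ → WImp σκs B aκ' ψ w → aκ ≠ ahalt →
      WImp σκs B aκ ((φ, aκ') :: ψ) (3 ^ j + w)

lemma WImp.to_implied {σκs : ℕ → KStoreF Var Addr} {B : ℕ} {σκT : KStoreF Var Addr}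
    (hsub : ∀ j ≤ B, SubStore (σκs j) σκT) :
    ∀ {aκ ψ w}, WImp σκs B aκ ψ w → Implied σκT aκ ψ := by
  intro aκ ψ w h
  induction h with
  | halt => exact .halt
  | cons hj hκ _ hne ih => exact .cons (hsub _ hj _ hκ) ih hne

lemma implied_to_wimp {σκs : ℕ → KStoreF Var Addr} {B : ℕ} :
    ∀ {aκ ψ}, Implied (σκs B) aκ ψ → ∃ w, WImp σκs B aκ ψ w := by
  intro aκ ψ h
  induction h with
  | halt => exact ⟨0, .halt⟩
  | cons hκ _ hne ih =>
    obtain ⟨w, hw⟩ := ih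
    exact ⟨3 ^ B + w, .cons le_rfl hκ hw hne⟩

section Chain

variable {Var Addr HAddr : Type}
variable {alloc : Var → StateF Var Addr → Addr} {e0 : Exp Var} {N : ℕ}

lemma chain_halt_empty :
    ∀ m (κ : KontF Var Addr), κ ∉ (chainXi alloc e0 m).σκ ahalt := by
  intro m
  induction m with
  | zero => intro κ h; simp [chainXi_zero, initXiF, botKStore] at h
  | succ m ih =>
    intro κ h
    rw [chainXi_succ] at h
    rcases mem_Fstep_σκ.1 h with ⟨c0, hc0, ς', hst, hκ⟩
    obtain ⟨e, ρ, aκ⟩ := c0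
    cases hst with
    | call hclo =>
      simp only [joinOne] at hκ
      rw [if_neg (by simp [ahalt])] at hκ
      exact ih κ hκ
    | ret hpop => exact ih κ hκ

lemma alloc_step_eq (hAC : AllocConsistent alloc e0)
    (hWFat : ∀ m, m ≤ N → ∃ ξp, WF alloc e0 ξp (chainXi alloc e0 m))
    {m : ℕ} (hm : m ≤ N) {x : Var} {e e' : Exp Var} {ρ ρ' : EnvF Var Addr}
    {aκ aκ' : KAddrF Var Addr} {σ'' : StoreF Var Addr} {σκ'' : KStoreF Var Addr}
    (hst : StepF alloc ⟨e, ρ, (chainXi alloc e0 m).σ, (chainXi alloc e0 m).σκ, aκ⟩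
      ⟨e', upd ρ' x (alloc x ⟨e, ρ, (chainXi alloc e0 m).σ, (chainXi alloc e0 m).σκ, aκ⟩),
       σ'', σκ'', aκ'⟩) :
    alloc x ⟨e, ρ, (chainXi alloc e0 m).σ, (chainXi alloc e0 m).σκ, aκ⟩
      = alloc x ⟨e, ρ, (chainXi alloc e0 (m + 1)).σ, (chainXi alloc e0 (m + 1)).σκ, aκ⟩ := by
  obtain ⟨ξp, hξp⟩ := hWFat m hm
  have := hAC ξp (chainXi alloc e0 m) (chainXi alloc e0 (m + 1)) e e' ρ ρ' aκ aκ' σ'' σκ'' x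
    hξp hst (by rw [chainXi_succ]; exact xiStepF_Fstep alloc e0 _)
  exact this

lemma step_lift (hAC : AllocConsistent alloc e0)
    (hWFat : ∀ m, m ≤ N → ∃ ξp, WF alloc e0 ξp (chainXi alloc e0 m))
    {m : ℕ} (hm : m ≤ N)
    (hσ : SubStore (chainXi alloc e0 m).σ (chainXi alloc e0 (m + 1)).σ)
    (hσκ : SubStore (chainXi alloc e0 m).σκ (chainXi alloc e0 (m + 1)).σκ)
    {c0 : ConfF Var Addr} {ς' : StateF Var Addr}
    (hst : StepF alloc (stateOfF (chainXi alloc e0 m) c0) ς') :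
    ∃ ς'', StepF alloc (stateOfF (chainXi alloc e0 (m + 1)) c0) ς'' ∧
      ς''.e = ς'.e ∧ ς''.ρ = ς'.ρ ∧ ς''.aκ = ς'.aκ ∧
      (∀ a, ς'.σ a ⊆ ς''.σ a) ∧ (∀ aκ, ς'.σκ aκ ⊆ ς''.σκ aκ) := by
  obtain ⟨e, ρ, aκ⟩ := c0
  simp only [stateOfF] at hst ⊢
  cases hst with
  | @call y x f ae eb eb' ρ ρlam σ σκ aκ hclo =>
    have hAeq := alloc_step_eq (x := x) hAC hWFat hm
      (StepF.call (y := y) (ae := ae) (e := eb) (σκ := (chainXi alloc e0 m).σκ)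
        (aκ := aκ) hclo)
    have hst2 := StepF.call (alloc := alloc) (y := y) (ae := ae) (e := eb)
      (σκ := (chainXi alloc e0 (m + 1)).σκ) (aκ := aκ) (aeval_mono hσ hclo)
    rw [← hAeq] at hst2
    refine ⟨_, hst2, rfl, rfl, rfl, ?_, ?_⟩
    · intro a z hz
      simp only [joinOne] at hz ⊢
      split_ifs at hz ⊢ with hcond
      · simp only [Set.mem_union] at hz ⊢
        rcases hz with hz | hz
        · exact Or.inl (hσ a hz)
        · exact Or.inr (aeval_mono hσ hz)
      · exact hσ a hz
    · intro aκ0 z hz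
      simp only [joinOne] at hz ⊢
      split_ifs at hz ⊢ with hcond
      · simp only [Set.mem_union] at hz ⊢
        rcases hz with hz | hz
        · exact Or.inl (hσκ aκ0 hz)
        · exact Or.inr hz
      · exact hσκ aκ0 hz
  | @ret x ae ek ρ ρκ σ σκ aκ aκ' hpop =>
    have hAeq := alloc_step_eq (x := x) hAC hWFat hm
      (StepF.ret (ae := ae) (ρ := ρ) (σ := (chainXi alloc e0 m).σ) hpop)
    have hst2 := StepF.ret (alloc := alloc) (ae := ae) (ρ := ρ)
      (σ := (chainXi alloc e0 (m + 1)).σ)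
      (hσκ aκ hpop)
    rw [← hAeq] at hst2
    refine ⟨_, hst2, rfl, rfl, rfl, ?_, ?_⟩
    · intro a z hz
      simp only [joinOne] at hz ⊢
      split_ifs at hz ⊢ with hcond
      · simp only [Set.mem_union] at hz ⊢
        rcases hz with hz | hz
        · exact Or.inl (hσ a hz)
        · exact Or.inr (aeval_mono hσ hz)
      · exact hσ a hz
    · intro aκ0 z hz
      exact hσκ aκ0 hz

lemma chain_mono (hAC : AllocConsistent alloc e0)
    (hWFat : ∀ m, m ≤ N → ∃ ξp, WF alloc e0 ξp (chainXi alloc e0 m)) :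
    ∀ m, m ≤ N →
      (chainXi alloc e0 m).r ⊆ (chainXi alloc e0 (m + 1)).r ∧
      SubStore (chainXi alloc e0 m).σ (chainXi alloc e0 (m + 1)).σ ∧
      SubStore (chainXi alloc e0 m).σκ (chainXi alloc e0 (m + 1)).σκ := by
  intro m
  induction m with
  | zero =>
    intro _
    refine ⟨?_, ?_, ?_⟩
    · intro c hc
      have hc' : c = initConfF e0 := by
        simpa [chainXi_zero, initXiF] using hc
      rw [chainXi_succ]
      exact mem_Fstep_r.2 (Or.inl hc')
    · intro a z hz; simp [chainXi_zero, initXiF, botStore] at hz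
    · intro a z hz; simp [chainXi_zero, initXiF, botKStore] at hz
  | succ m ih =>
    intro hm
    obtain ⟨ihr, ihσ, ihσκ⟩ := ih (by omega)
    have hmN : m ≤ N := by omega
    refine ⟨?_, ?_, ?_⟩
    · intro c hc
      rw [chainXi_succ] at hc
      rw [chainXi_succ alloc e0 (m + 1)]
      rcases mem_Fstep_r.1 hc with rfl | ⟨c0, hc0, ς', hst, rfl⟩
      · exact mem_Fstep_r.2 (Or.inl rfl)
      · obtain ⟨ς'', hst'', he, hρ, haκ, _, _⟩ := step_lift hAC hWFat hmN ihσ ihσκ hst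
        exact mem_Fstep_r.2 (Or.inr ⟨c0, ihr hc0, ς'', hst'', by rw [he, hρ, haκ]⟩)
    · intro a z hz
      rw [chainXi_succ] at hz
      rw [chainXi_succ alloc e0 (m + 1)]
      rcases mem_Fstep_σ.1 hz with ⟨c0, hc0, ς', hst, hmem⟩
      obtain ⟨ς'', hst'', _, _, _, hsub, _⟩ := step_lift hAC hWFat hmN ihσ ihσκ hst
      exact mem_Fstep_σ.2 ⟨c0, ihr hc0, ς'', hst'', hsub a hmem⟩
    · intro aκ z hz
      rw [chainXi_succ] at hz
      rw [chainXi_succ alloc e0 (m + 1)]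
      rcases mem_Fstep_σκ.1 hz with ⟨c0, hc0, ς', hst, hmem⟩
      obtain ⟨ς'', hst'', _, _, _, _, hsub⟩ := step_lift hAC hWFat hmN ihσ ihσκ hst
      exact mem_Fstep_σκ.2 ⟨c0, ihr hc0, ς'', hst'', hsub aκ hmem⟩

lemma chain_mono_le (hAC : AllocConsistent alloc e0)
    (hWFat : ∀ m, m ≤ N → ∃ ξp, WF alloc e0 ξp (chainXi alloc e0 m))
    {j m : ℕ} (hj : j ≤ m) (hm : m ≤ N + 1) :
    (chainXi alloc e0 j).r ⊆ (chainXi alloc e0 m).r ∧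
    SubStore (chainXi alloc e0 j).σ (chainXi alloc e0 m).σ ∧
    SubStore (chainXi alloc e0 j).σκ (chainXi alloc e0 m).σκ := by
  induction hj with
  | refl => exact ⟨subset_rfl, fun _ => subset_rfl, fun _ => subset_rfl⟩
  | @step m' hj' ih =>
    have hm' : m' ≤ N := by omega
    obtain ⟨ihr, ihσ, ihσκ⟩ := ih (by omega)
    obtain ⟨hr, hσ, hσκ⟩ := chain_mono hAC hWFat m' hm'
    exact ⟨ihr.trans hr, fun a => (ihσ a).trans (hσ a), fun a => (ihσκ a).trans (hσκ a)⟩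

lemma alloc_climb (hAC : AllocConsistent alloc e0)
    (hWFat : ∀ m, m ≤ N → ∃ ξp, WF alloc e0 ξp (chainXi alloc e0 m))
    {x : Var} {e : Exp Var} {ρ : EnvF Var Addr} {aκ : KAddrF Var Addr} :
    ∀ d lo, lo + d = N + 1 →
    (∀ m, lo ≤ m → m ≤ N → ∃ e' ρ' σ'' σκ'' aκ',
        StepF alloc ⟨e, ρ, (chainXi alloc e0 m).σ, (chainXi alloc e0 m).σκ, aκ⟩
          ⟨e', upd ρ' x (alloc x ⟨e, ρ, (chainXi alloc e0 m).σ, (chainXi alloc e0 m).σκ, aκ⟩),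
           σ'', σκ'', aκ'⟩) →
    alloc x ⟨e, ρ, (chainXi alloc e0 lo).σ, (chainXi alloc e0 lo).σκ, aκ⟩
      = alloc x ⟨e, ρ, (chainXi alloc e0 (N + 1)).σ, (chainXi alloc e0 (N + 1)).σκ, aκ⟩ := by
  intro d
  induction d with
  | zero =>
    intro lo h _
    obtain rfl : lo = N + 1 := by omega
    rfl
  | succ d ihd =>
    intro lo hlo hsteps
    have hloN : lo ≤ N := by omega
    obtain ⟨e', ρ', σ'', σκ'', aκ', hst⟩ := hsteps lo le_rfl hloN
    have h1 := alloc_step_eq hAC hWFat hloN hst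
    rw [h1]
    exact ihd (lo + 1) (by omega) (fun m hm1 hm2 => hsteps m (by omega) hm2)

lemma push_origin :
    ∀ j, ∀ {aκt : KAddrF Var Addr} {φ : FrameF Var Addr} {aκr : KAddrF Var Addr},
    (φ, aκr) ∈ (chainXi alloc e0 j).σκ aκt →
    ∃ j', 1 ≤ j' ∧ j' ≤ j ∧ ∃ (xh : Var) (fh aeh : AExp Var) (eh : Exp Var)
      (ρh : EnvF Var Addr),
      φ = (xh, eh, ρh) ∧
      (Exp.letCall xh fh aeh eh, ρh, aκr) ∈ (chainXi alloc e0 (j' - 1)).r ∧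
      ∃ (xl : Var) (e₂ : Exp Var) (ρlam : EnvF Var Addr),
        (Lam.mk xl e₂, ρlam) ∈ aeval fh ρh (chainXi alloc e0 (j' - 1)).σ ∧
        aκt = some (e₂, upd ρlam xl (alloc xl ⟨Exp.letCall xh fh aeh eh, ρh,
          (chainXi alloc e0 (j' - 1)).σ, (chainXi alloc e0 (j' - 1)).σκ, aκr⟩)) := by
  intro j
  induction j with
  | zero =>
    intro aκt φ aκr h
    simp [chainXi_zero, initXiF, botKStore] at h
  | succ j ih =>
    intro aκt φ aκr h
    rw [chainXi_succ] at h
    rcases mem_Fstep_σκ.1 h with ⟨c0, hc0, ς', hst, hκ⟩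
    obtain ⟨e, ρ, aκ⟩ := c0
    simp only [stateOfF] at hst
    cases hst with
    | @call y x f ae eb eb' ρ ρlam σ σκ aκ hclo =>
      simp only [joinOne] at hκ
      split at hκ
      · rcases hκ with hκ | hκ
        · obtain ⟨j', h1, h2, rest⟩ := ih hκ
          exact ⟨j', h1, by omega, rest⟩
        · simp only [Set.mem_singleton_iff, Prod.mk.injEq] at hκ
          obtain ⟨rfl, rfl⟩ := hκ
          refine ⟨j + 1, by omega, le_rfl, y, f, ae, eb, ρ, rfl, ?_, x, eb', ρlam, ?_, ?_⟩
          · simpa using hc0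
          · simpa using hclo
          · simpa using ‹aκt = _›
      · obtain ⟨j', h1, h2, rest⟩ := ih hκ
        exact ⟨j', h1, by omega, rest⟩
    | ret hpop =>
      obtain ⟨j', h1, h2, rest⟩ := ih hκ
      exact ⟨j', h1, by omega, rest⟩

end Chain

section FixH

variable {Var HAddr : Type} {halloc : Var → StateH Var HAddr → HAddr} {e0 : Exp Var}
variable {rH : Set (ConfH Var HAddr)} {σH : StoreF Var HAddr}

lemma fix_r_eq (hfix : XiStepH halloc e0 ⟨rH, σH⟩ ⟨rH, σH⟩) :
    rH = {c | ∃ ς ∈ succSetH halloc e0 ⟨rH, σH⟩, c = (ς.e, ς.ρ, ς.κ)} := hfix.1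

lemma fix_σ_eq (hfix : XiStepH halloc e0 ⟨rH, σH⟩ ⟨rH, σH⟩) :
    σH = (fun a => ⋃ ς ∈ succSetH halloc e0 ⟨rH, σH⟩, ς.σ a) := hfix.2

lemma fix_mem_init (hfix : XiStepH halloc e0 ⟨rH, σH⟩ ⟨rH, σH⟩) :
    (e0, emptyEnv, ([] : List (FrameF Var HAddr))) ∈ rH := by
  rw [fix_r_eq hfix]
  exact ⟨initStateH e0, Set.mem_insert _ _, rfl⟩

lemma fix_mem_step (hfix : XiStepH halloc e0 ⟨rH, σH⟩ ⟨rH, σH⟩)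
    {e : Exp Var} {ρ : EnvF Var HAddr} {κs : List (FrameF Var HAddr)}
    (h : (e, ρ, κs) ∈ rH) {ς' : StateH Var HAddr}
    (hs : StepH halloc ⟨e, ρ, σH, κs⟩ ς') : (ς'.e, ς'.ρ, ς'.κ) ∈ rH := by
  rw [fix_r_eq hfix]
  exact ⟨ς', Set.mem_insert_iff.2 (Or.inr ⟨(e, ρ, κs), h, hs⟩), rfl⟩

lemma fix_store_step (hfix : XiStepH halloc e0 ⟨rH, σH⟩ ⟨rH, σH⟩)
    {e : Exp Var} {ρ : EnvF Var HAddr} {κs : List (FrameF Var HAddr)}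
    (h : (e, ρ, κs) ∈ rH) {ς' : StateH Var HAddr}
    (hs : StepH halloc ⟨e, ρ, σH, κs⟩ ς') {a : HAddr} {d : CloF Var HAddr}
    (hd : d ∈ ς'.σ a) : d ∈ σH a := by
  have h2 : σH a = ⋃ ς ∈ succSetH halloc e0 ⟨rH, σH⟩, ς.σ a :=
    congrFun (fix_σ_eq hfix) a
  rw [h2]
  exact Set.mem_iUnion₂.2 ⟨ς', Set.mem_insert_iff.2 (Or.inr ⟨(e, ρ, κs), h, hs⟩), hd⟩

end FixH

section Sim

variable {Var Addr HAddr : Type}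
variable {alloc : Var → StateF Var Addr → Addr} {e0 : Exp Var}
variable {halloc : Var → StateH Var HAddr → HAddr} {HA : Addr ≃ HAddr}
variable {rH : Set (ConfH Var HAddr)} {σH : StoreF Var HAddr} {N : ℕ}

lemma store_prec_next
    (hAE : AllocEquiv HA alloc halloc)
    (hfix : XiStepH halloc e0 ⟨rH, σH⟩ ⟨rH, σH⟩)
    (hRP : RPrec HA rH (chainXi alloc e0 N).r (chainXi alloc e0 N).σκ)
    (hSP : StorePrec HA σH (chainXi alloc e0 N).σ)
    (hINV1 : ∀ c ∈ (chainXi alloc e0 N).r, ∃ ψ, Implied (chainXi alloc e0 N).σκ c.2.2 ψ)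
    (hINV2 : ∀ (aκt : KAddrF Var Addr) (κ : KontF Var Addr),
      κ ∈ (chainXi alloc e0 N).σκ aκt → ∃ ψ, Implied (chainXi alloc e0 N).σκ κ.2 ψ) :
    StorePrec HA σH (chainXi alloc e0 (N + 1)).σ := by
  intro a clo hclo
  rw [chainXi_succ] at hclo
  rcases mem_Fstep_σ.1 hclo with ⟨c0, hc0, ς', hst, hmem⟩
  obtain ⟨e, ρ, aκc⟩ := c0
  simp only [stateOfF] at hst
  cases hst with
  | @call y x f ae eb eb' ρ ρlam σ σκ aκ hcloF =>
    simp only [joinOne] at hmem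
    split_ifs at hmem with ha
    · simp only [Set.mem_union] at hmem
      rcases hmem with hmem | hmem
      · exact hSP a clo hmem
      · obtain ⟨ψc, hψc⟩ := hINV1 _ hc0
        have himg := hRP _ _ _ _ hc0 hψc
        have hcloH : (Lam.mk x eb', HEnv HA ρlam) ∈ aeval f (HEnv HA ρ) σH :=
          aeval_prec hSP hcloF
        have hstH := StepH.call (halloc := halloc) (y := y) (ae := ae) (e := eb)
          (κ := HKont HA ψc) hcloH
        have hAeq : halloc x ⟨Exp.letCall y f ae eb, HEnv HA ρ, σH, HKont HA ψc⟩
            = HA (alloc x ⟨Exp.letCall y f ae eb, ρ, (chainXi alloc e0 N).σ,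
                (chainXi alloc e0 N).σκ, aκc⟩) :=
          hAE x _ ρ _ _ aκc σH ψc hSP hψc
        refine fix_store_step hfix himg hstH (a := HA a) ?_
        simp only [joinOne]
        rw [if_pos (by rw [hAeq, ha])]
        exact Or.inr (aeval_prec hSP hmem)
    · exact hSP a clo hmem
  | @ret x ae ek ρ ρκ σ σκ aκ aκ' hpop =>
    simp only [joinOne] at hmem
    split_ifs at hmem with ha
    · simp only [Set.mem_union] at hmem
      rcases hmem with hmem | hmem
      · exact hSP a clo hmem
      · obtain ⟨ψt, hψt⟩ := hINV2 _ _ hpop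
        have haκc : aκc ≠ ahalt := by
          intro h; exact chain_halt_empty N _ (h ▸ hpop)
        have hψc : Implied (chainXi alloc e0 N).σκ aκc (((x, ek, ρκ), aκ') :: ψt) :=
          .cons hpop hψt haκc
        have himg := hRP _ _ _ _ hc0 hψc
        have hstH := StepH.ret (halloc := halloc) (ae := ae) (ρ := HEnv HA ρ)
          (σ := σH) (x := x) (e := ek) (ρκ := HEnv HA ρκ) (κ := HKont HA ψt)
        have himg' : (Exp.ret ae, HEnv HA ρ,
            (x, ek, HEnv HA ρκ) :: HKont HA ψt) ∈ rH := himg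
        have hAeq : halloc x ⟨Exp.ret ae, HEnv HA ρ, σH,
              (x, ek, HEnv HA ρκ) :: HKont HA ψt⟩
            = HA (alloc x ⟨Exp.ret ae, ρ, (chainXi alloc e0 N).σ,
                (chainXi alloc e0 N).σκ, aκc⟩) :=
          hAE x _ ρ _ _ aκc σH (((x, ek, ρκ), aκ') :: ψt) hSP hψc
        refine fix_store_step hfix himg' hstH (a := HA a) ?_
        simp only [joinOne]
        rw [if_pos (by rw [hAeq, ha])]
        exact Or.inr (aeval_prec hSP hmem)
    · exact hSP a clo hmem

lemma main_sim
    (hAE : AllocEquiv HA alloc halloc) (hAC : AllocConsistent alloc e0)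
    (hfix : XiStepH halloc e0 ⟨rH, σH⟩ ⟨rH, σH⟩)
    (hWFat : ∀ m, m ≤ N → ∃ ξp, WF alloc e0 ξp (chainXi alloc e0 m))
    (hSP' : StorePrec HA σH (chainXi alloc e0 (N + 1)).σ) :
    ∀ W k (c : ConfF Var Addr) (ψ : List (KontF Var Addr)) w,
      k ≤ N + 1 → c ∈ (chainXi alloc e0 k).r →
      WImp (fun j => (chainXi alloc e0 j).σκ) (N + 1) c.2.2 ψ w →
      3 ^ k + w ≤ W →
      (c.1, HEnv HA c.2.1, HKont HA ψ) ∈ rH := by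
  have hκsub : ∀ j ≤ N + 1,
      SubStore (chainXi alloc e0 j).σκ (chainXi alloc e0 (N + 1)).σκ :=
    fun j hj => (chain_mono_le hAC hWFat hj le_rfl).2.2
  intro W
  induction W using Nat.strong_induction_on with
  | _ W IH =>
    intro k c ψ w hk hc hψ hW
    cases k with
    | zero =>
      have hcinit : c = initConfF e0 := by
        simpa [chainXi_zero, initXiF] using hc
      subst hcinit
      cases hψ with
      | halt => simpa [initConfF, HEnv_empty, HKont] using fix_mem_init hfix
      | cons _ _ _ hne => exact absurd rfl hne
    | succ k' =>
      have hk' : k' ≤ N := by omega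
      rw [chainXi_succ] at hc
      rcases mem_Fstep_r.1 hc with hcinit | ⟨c0, hc0, ς', hst, rfl⟩
      · subst hcinit
        cases hψ with
        | halt => simpa [initConfF, HEnv_empty, HKont] using fix_mem_init hfix
        | cons _ _ _ hne => exact absurd rfl hne
      · obtain ⟨e, ρ, aκc⟩ := c0
        simp only [stateOfF] at hst
        cases hst with
        | @ret x ae ek ρ ρκ σ σκ aκ aκ' hpop =>
          have h3 : 0 < 3 ^ k' := pow_pos (by norm_num) k'
          rw [pow_succ] at hW
          have haκc : aκc ≠ ahalt := fun h => chain_halt_empty k' _ (h ▸ hpop)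
          have hψ0 : WImp (fun j => (chainXi alloc e0 j).σκ) (N + 1) aκc
              (((x, ek, ρκ), aκ') :: ψ) (3 ^ k' + w) :=
            .cons (by omega) hpop hψ haκc
          have himg0 := IH (3 ^ k' + (3 ^ k' + w)) (by omega) k'
            (Exp.ret ae, ρ, aκc) (((x, ek, ρκ), aκ') :: ψ) (3 ^ k' + w)
            (by omega) hc0 hψ0 le_rfl
          have himg0' : (Exp.ret ae, HEnv HA ρ,
              (x, ek, HEnv HA ρκ) :: HKont HA ψ) ∈ rH := himg0
          have hstH := StepH.ret (halloc := halloc) (ae := ae) (ρ := HEnv HA ρ)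
            (σ := σH) (x := x) (e := ek) (ρκ := HEnv HA ρκ) (κ := HKont HA ψ)
          have hImp : Implied (chainXi alloc e0 (N + 1)).σκ aκc
              (((x, ek, ρκ), aκ') :: ψ) := hψ0.to_implied hκsub
          have hAeq : halloc x ⟨Exp.ret ae, HEnv HA ρ, σH,
                (x, ek, HEnv HA ρκ) :: HKont HA ψ⟩
              = HA (alloc x ⟨Exp.ret ae, ρ, (chainXi alloc e0 (N + 1)).σ,
                  (chainXi alloc e0 (N + 1)).σκ, aκc⟩) :=
            hAE x _ ρ _ _ aκc σH (((x, ek, ρκ), aκ') :: ψ) hSP' hImp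
          have hclimb : alloc x ⟨Exp.ret ae, ρ, (chainXi alloc e0 k').σ,
                (chainXi alloc e0 k').σκ, aκc⟩
              = alloc x ⟨Exp.ret ae, ρ, (chainXi alloc e0 (N + 1)).σ,
                  (chainXi alloc e0 (N + 1)).σκ, aκc⟩ := by
            refine alloc_climb hAC hWFat (N + 1 - k') k' (by omega) ?_
            intro m hm1 hm2
            have hsub := (chain_mono_le hAC hWFat hm1 (by omega)).2.2
            exact ⟨ek, ρκ, _, _, aκ', StepF.ret (alloc := alloc) (ae := ae) (ρ := ρ)
              (σ := (chainXi alloc e0 m).σ) (hsub aκc hpop)⟩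
          have hmem := fix_mem_step hfix himg0' hstH
          have hfin : upd (HEnv HA ρκ) x (halloc x ⟨Exp.ret ae, HEnv HA ρ, σH,
                (x, ek, HEnv HA ρκ) :: HKont HA ψ⟩)
              = HEnv HA (upd ρκ x (alloc x ⟨Exp.ret ae, ρ, (chainXi alloc e0 k').σ,
                  (chainXi alloc e0 k').σκ, aκc⟩)) := by
            rw [HEnv_upd, hclimb]
            rw [hAeq]
          show (ek, HEnv HA (upd ρκ x (alloc x ⟨Exp.ret ae, ρ, (chainXi alloc e0 k').σ,
              (chainXi alloc e0 k').σκ, aκc⟩)), HKont HA ψ) ∈ rH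
          rw [← hfin]
          exact hmem
        | @call y x f ae eb eb' ρ ρlam σ σκ aκ hcloF =>
          cases hψ with
          | @cons φh aκh _ ψ' w' j hjB hκh hψtl hne =>
            obtain ⟨j', hj'1, hj'le, xh, fh, aeh, eh, ρh, hφ, hcp, xl, e₂, ρlam', hclo', htgt⟩ :=
              push_origin j hκh
            subst hφ
            simp only [Option.some.injEq, Prod.mk.injEq] at htgt
            obtain ⟨heq, henv⟩ := htgt
            subst heq
            have hwlt : 3 ^ (j' - 1) + w' < W := by
              have hj1 : 3 ^ (j' - 1) < 3 ^ j :=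
                Nat.pow_lt_pow_right (by norm_num) (by omega)
              have h3 : 0 < 3 ^ (k' + 1) := pow_pos (by norm_num) _
              omega
            have himgP := IH (3 ^ (j' - 1) + w') hwlt (j' - 1)
              (Exp.letCall xh fh aeh eh, ρh, aκh) ψ' w' (by omega) hcp hψtl le_rfl
            have himgP' : (Exp.letCall xh fh aeh eh, HEnv HA ρh, HKont HA ψ') ∈ rH :=
              himgP
            have hcloH : (Lam.mk xl eb', HEnv HA ρlam') ∈ aeval fh (HEnv HA ρh) σH := by
              have hsubσ := (chain_mono_le hAC hWFat
                (show j' - 1 ≤ N + 1 by omega) le_rfl).2.1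
              exact aeval_prec hSP' (aeval_mono hsubσ hclo')
            have hstH := StepH.call (halloc := halloc) (y := xh) (ae := aeh) (e := eh)
              (κ := HKont HA ψ') hcloH
            have hmem := fix_mem_step hfix himgP' hstH
            have hImp' : Implied (chainXi alloc e0 (N + 1)).σκ aκh ψ' :=
              hψtl.to_implied hκsub
            have hAeq : halloc xl ⟨Exp.letCall xh fh aeh eh, HEnv HA ρh, σH, HKont HA ψ'⟩
                = HA (alloc xl ⟨Exp.letCall xh fh aeh eh, ρh,
                    (chainXi alloc e0 (N + 1)).σ, (chainXi alloc e0 (N + 1)).σκ, aκh⟩) :=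
              hAE xl _ ρh _ _ aκh σH ψ' hSP' hImp'
            have hclimb : alloc xl ⟨Exp.letCall xh fh aeh eh, ρh,
                  (chainXi alloc e0 (j' - 1)).σ, (chainXi alloc e0 (j' - 1)).σκ, aκh⟩
                = alloc xl ⟨Exp.letCall xh fh aeh eh, ρh,
                    (chainXi alloc e0 (N + 1)).σ, (chainXi alloc e0 (N + 1)).σκ, aκh⟩ := by
              refine alloc_climb hAC hWFat (N + 1 - (j' - 1)) (j' - 1) (by omega) ?_
              intro m hm1 hm2
              have hsubσ := (chain_mono_le hAC hWFat hm1 (by omega)).2.1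
              exact ⟨eb', ρlam', _, _, _, StepF.call (alloc := alloc) (y := xh)
                (ae := aeh) (e := eh) (σκ := (chainXi alloc e0 m).σκ) (aκ := aκh)
                (aeval_mono hsubσ hclo')⟩
            have hfin : upd (HEnv HA ρlam') xl (halloc xl ⟨Exp.letCall xh fh aeh eh,
                  HEnv HA ρh, σH, HKont HA ψ'⟩)
                = HEnv HA (upd ρlam' xl (alloc xl ⟨Exp.letCall xh fh aeh eh, ρh,
                    (chainXi alloc e0 (j' - 1)).σ, (chainXi alloc e0 (j' - 1)).σκ, aκh⟩)) := by
              rw [HEnv_upd, hclimb, hAeq]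
            show (eb', HEnv HA (upd ρlam x (alloc x ⟨Exp.letCall y f ae eb, ρ,
                (chainXi alloc e0 k').σ, (chainXi alloc e0 k').σκ, aκc⟩)),
                HKont HA (((xh, eh, ρh), aκh) :: ψ')) ∈ rH
            rw [henv, ← hfin]
            exact hmem

end Sim

end Aux

/-- **Preservation of precision for reachable configurations** (Lemma 6).
If `(r̂, σ̂)` is a fixed point of `⤳̂Ξ`, `wf(ξ̃, (r̃, σ̃, σ̃κ))`,
`(r̃, σ̃, σ̃κ) ⤳̃Ξ (r̃', σ̃', σ̃′κ)`, and `(r̂, σ̂) ⊒Ξ (r̃, σ̃, σ̃κ)`,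
then `r̂ ⊒R r̃' (via σ̃′κ)`. -/
theorem preservation_of_precision_for_reachable_configurations
    {Var Addr HAddr : Type} (e0 : Exp Var)
    (alloc : Var → StateF Var Addr → Addr)
    (halloc : Var → StateH Var HAddr → HAddr)
    (HA : Addr ≃ HAddr)
    (hAllocEquiv : AllocEquiv HA alloc halloc)
    (hAllocConsistent : AllocConsistent alloc e0)
    (rH : Set (ConfH Var HAddr)) (σH : StoreF Var HAddr)
    (hfix : XiStepH halloc e0 ⟨rH, σH⟩ ⟨rH, σH⟩)
    (ξ : XiF Var Addr) (r : Set (ConfF Var Addr)) (σ : StoreF Var Addr)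
    (σκ : KStoreF Var Addr)
    (hwf : WF alloc e0 ξ ⟨r, σ, σκ⟩)
    (r' : Set (ConfF Var Addr)) (σ' : StoreF Var Addr) (σκ' : KStoreF Var Addr)
    (hstep : XiStepF alloc e0 ⟨r, σ, σκ⟩ ⟨r', σ', σκ'⟩)
    (hprec : XiPrec HA ⟨rH, σH⟩ ⟨r, σ, σκ⟩) :
    RPrec HA rH r' σκ' := by
  classical
  -- invariants of the current widened result, from well-formedness
  have hINV1 : ∀ c ∈ r, ∃ ψ, Implied σκ c.2.2 ψ := by
    rcases hwf with ⟨hrest⟩ | ⟨hw, hxi, hrest⟩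
    · intro c hc
      have hc' : c = initConfF e0 := by simpa [initXiF] using hc
      subst hc'
      exact ⟨[], .halt⟩
    · intro c hc
      exact (hrest.2.2.2.1 c hc).imp (fun ψ h => h.1)
  have hINV2 : ∀ (aκt : KAddrF Var Addr) (κ : KontF Var Addr),
      κ ∈ σκ aκt → ∃ ψ, Implied σκ κ.2 ψ := by
    rcases hwf with ⟨hrest⟩ | ⟨hw, hxi, hrest⟩
    · intro aκt κ hκ
      simp [initXiF, botKStore] at hκ
    · intro aκt κ hκ
      obtain ⟨⟨xk, ek, ρκk⟩, aκrest⟩ := κ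
      obtain ⟨eκ', ρκ', heq, hentry, f, ae, hcaller, hsub⟩ :=
        hrest.2.2.2.2.2 aκt xk ek ρκk aκrest hκ
      obtain ⟨ψ, hψ, _⟩ := hrest.2.2.2.1 _ (hrest.1.1 hcaller)
      exact ⟨ψ, hψ⟩
  -- extract the chain
  obtain ⟨N, hNeq, hWF0, hchain⟩ := chain_extract hwf
  have hr : r = (chainXi alloc e0 N).r := congrArg XiF.r hNeq
  have hσ : σ = (chainXi alloc e0 N).σ := congrArg XiF.σ hNeq
  have hσκ : σκ = (chainXi alloc e0 N).σκ := congrArg XiF.σκ hNeq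
  have hξ' : (⟨r', σ', σκ'⟩ : XiF Var Addr) = chainXi alloc e0 (N + 1) := by
    rw [chainXi_succ, ← hNeq]
    exact xiStepF_eq_Fstep hstep
  have hr' : r' = (chainXi alloc e0 (N + 1)).r := congrArg XiF.r hξ'
  have hσκ' : σκ' = (chainXi alloc e0 (N + 1)).σκ := congrArg XiF.σκ hξ'
  have hWFat : ∀ m, m ≤ N → ∃ ξp, WF alloc e0 ξp (chainXi alloc e0 m) := by
    intro m hm
    rcases Nat.eq_zero_or_pos m with rfl | hpos
    · exact ⟨initXiF e0, hWF0⟩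
    · refine ⟨chainXi alloc e0 (m - 1), ?_⟩
      have := hchain (m - 1) (by omega)
      rwa [show m - 1 + 1 = m by omega] at this
  rw [hr, hσκ] at hINV1
  rw [hσκ] at hINV2
  have hRP : RPrec HA rH (chainXi alloc e0 N).r (chainXi alloc e0 N).σκ := by
    rw [← hr, ← hσκ]; exact hprec.1
  have hSP : StorePrec HA σH (chainXi alloc e0 N).σ := by
    rw [← hσ]; exact hprec.2
  have hINV2' : ∀ (aκt : KAddrF Var Addr) (κ : KontF Var Addr),
      κ ∈ (chainXi alloc e0 N).σκ aκt →
      ∃ ψ, Implied (chainXi alloc e0 N).σκ κ.2 ψ := hINV2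
  have hINV1' : ∀ c ∈ (chainXi alloc e0 N).r,
      ∃ ψ, Implied (chainXi alloc e0 N).σκ c.2.2 ψ := hINV1
  have hSP' := store_prec_next hAllocEquiv hfix hRP hSP hINV1' hINV2'
  -- conclude
  intro e ρ aκ ψ hmem himp
  rw [hσκ'] at himp
  rw [hr'] at hmem
  obtain ⟨w, hw⟩ := implied_to_wimp
    (σκs := fun j => (chainXi alloc e0 j).σκ) (B := N + 1) himp
  exact main_sim hAllocEquiv hAllocConsistent hfix hWFat hSP'
    (3 ^ (N + 1) + w) (N + 1) (e, ρ, aκ) ψ w le_rfl hmem hw le_rfl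

end P4F
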